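/- If α is irrational, then for every real θ and every ε > 0 there exists an integer m and a real φ with |θ' - (θ + 2παm)| < ε modulo 2π; consequently the spectrum of the almost Mathieu operator H(α,β,θ) does not depend on θ: Sp(H(α,β,θ)) = Sp(H(α,β,θ')) for all θ, θ'. -/

import Mathlib

abbrev ℓ2 : Type := lp (fun _ : ℤ => ℂ) 2

/-!
Fix `z ∈ ℂ`. The set of phases `θ` with `z ∈ Sp H(θ)` is closed, because `θ ↦ H(θ)` is Lipschitz
in operator norm and the invertible operators form an open set. It is invariant under the
translations `θ ↦ θ + 2παm + 2πk`: conjugating `H(θ)` by the shift `ξ ↦ ξ(· + m)` gives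
`H(θ + 2παm)`, and the potential is `2π`-periodic in `θ`. For irrational `α` these translations
form a dense subgroup of `ℝ`, so the set is either empty or all of `ℝ`.
-/

open scoped ENNReal Pointwise
open Real

namespace lp

variable {α β : Type*} (𝕜 : Type*) {E : Type*} [NormedField 𝕜] [NormedAddCommGroup E]
  [NormedSpace 𝕜 E] {p : ℝ≥0∞}

theorem memℓp_comp_equiv_iff (e : β ≃ α) {f : α → E} :
    Memℓp (f ∘ e) p ↔ Memℓp f p := by
  rcases p.trichotomy with rfl | rfl | hp
  · simp only [memℓp_zero_iff, Function.comp_apply]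
    exact ⟨fun h => Set.finite_of_finite_preimage h (by simp),
      fun h => h.preimage e.injective.injOn⟩
  · simp only [memℓp_infty_iff, Function.comp_apply]
    exact e.surjective.range_comp (fun i => ‖f i‖) ▸ Iff.rfl
  · simp only [memℓp_gen_iff hp, Function.comp_apply]
    exact e.summable_iff (f := fun i => ‖f i‖ ^ p.toReal)

noncomputable def compEquiv [Fact (1 ≤ p)] (e : β ≃ α) :
    lp (fun _ : α => E) p ≃ₗᵢ[𝕜] lp (fun _ : β => E) p where
  toFun f := ⟨f ∘ e, (memℓp_comp_equiv_iff e).2 f.2⟩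
  invFun g := ⟨g ∘ e.symm, (memℓp_comp_equiv_iff e.symm).2 g.2⟩
  map_add' _ _ := rfl
  map_smul' _ _ := rfl
  left_inv f := by ext; simp
  right_inv g := by ext; simp
  norm_map' f := by
    rcases p.dichotomy with rfl | hp
    · simp only [norm_eq_ciSup]
      exact e.iSup_comp (g := fun i => ‖f i‖)
    · simp only [norm_eq_tsum_rpow (zero_lt_one.trans_le hp)]
      congr 1
      exact e.tsum_eq (fun i => ‖f i‖ ^ p.toReal)

theorem opNorm_le_of_forall_norm_apply_le {𝕜 : Type*} [RCLike 𝕜] {E F : α → Type*}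
    [∀ i, NormedAddCommGroup (E i)] [∀ i, NormedSpace 𝕜 (E i)]
    [∀ i, NormedAddCommGroup (F i)] [∀ i, NormedSpace 𝕜 (F i)] [Fact (1 ≤ p)]
    (T : lp E p →L[𝕜] lp F p) {C : ℝ} (hC : 0 ≤ C) (h : ∀ x i, ‖T x i‖ ≤ C * ‖x i‖) :
    ‖T‖ ≤ C := by
  have hp : p ≠ 0 := (zero_lt_one.trans_le Fact.out).ne'
  refine T.opNorm_le_bound hC fun x => ?_
  calc ‖T x‖ ≤ ‖(C : 𝕜) • x‖ := norm_mono hp fun i => by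
        simpa [norm_smul, RCLike.norm_ofReal, abs_of_nonneg hC] using h x i
    _ = C * ‖x‖ := by rw [norm_const_smul hp, RCLike.norm_ofReal, abs_of_nonneg hC]

end lp

theorem isClosed_setOf_mem_spectrum {𝕜 A : Type*} [NormedField 𝕜] [NormedRing A]
    [NormedAlgebra 𝕜 A] [CompleteSpace A] (z : 𝕜) : IsClosed {a : A | z ∈ spectrum 𝕜 a} :=
  (Units.isOpen.preimage (continuous_const.sub continuous_id)).isClosed_compl

theorem IsClosed.eq_univ_of_add_mem {G : Type*} [AddGroup G] [TopologicalSpace G]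
    [ContinuousAdd G] {Γ : AddSubgroup G} (hΓ : Dense (Γ : Set G)) {S : Set G} (hS : IsClosed S)
    (hadd : ∀ x ∈ S, ∀ g ∈ Γ, x + g ∈ S) (hne : S.Nonempty) : S = Set.univ := by
  obtain ⟨x, hx⟩ := hne
  have htranslate : x +ᵥ (Γ : Set G) ⊆ S := by
    rintro _ ⟨g, hg, rfl⟩
    exact hadd x hx g hg
  exact Set.eq_univ_of_univ_subset ((hΓ.vadd x).closure_eq ▸ hS.closure_subset_iff.2 htranslate)

def IsAlmostMathieuFamily (α β : ℝ) (H : ℝ → ℓ2 →L[ℂ] ℓ2) : Prop :=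
  ∀ (θ : ℝ) (ξ : ℓ2) (n : ℤ),
    (H θ ξ : ∀ _ : ℤ, ℂ) n =
      (ξ : ∀ _ : ℤ, ℂ) (n + 1) + (ξ : ∀ _ : ℤ, ℂ) (n - 1) +
        (2 * β * cos (2 * π * α * n + θ) : ℝ) * (ξ : ∀ _ : ℤ, ℂ) n

noncomputable def ℓ2.shift (m : ℤ) : ℓ2 ≃L[ℂ] ℓ2 :=
  (lp.compEquiv ℂ (Equiv.addRight m)).toContinuousLinearEquiv

@[simp] theorem ℓ2.shift_apply (m : ℤ) (ξ : ℓ2) (n : ℤ) :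
    (ℓ2.shift m ξ : ∀ _ : ℤ, ℂ) n = (ξ : ∀ _ : ℤ, ℂ) (n + m) := rfl

@[simp] theorem ℓ2.shift_symm_apply (m : ℤ) (ξ : ℓ2) (n : ℤ) :
    ((ℓ2.shift m).symm ξ : ∀ _ : ℤ, ℂ) n = (ξ : ∀ _ : ℤ, ℂ) (n - m) := rfl

namespace IsAlmostMathieuFamily

variable {α β : ℝ} {H : ℝ → ℓ2 →L[ℂ] ℓ2}

theorem norm_sub_le (hH : IsAlmostMathieuFamily α β H) (θ θ' : ℝ) :
    ‖H θ - H θ'‖ ≤ 2 * |β| * |θ - θ'| := by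
  refine lp.opNorm_le_of_forall_norm_apply_le _ (by positivity) fun ξ n => ?_
  have hcos := Real.abs_cos_sub_cos_le (2 * π * α * n + θ) (2 * π * α * n + θ')
  rw [sub_apply, lp.coeFn_sub, Pi.sub_apply, hH θ, hH θ', add_sub_add_left_eq_sub, ← sub_mul,
    ← Complex.ofReal_sub, norm_mul, Complex.norm_real, Real.norm_eq_abs, ← mul_sub, abs_mul,
    abs_mul, abs_two]
  gcongr 2 * |β| * ?_ * _
  simpa using hcos

theorem continuous (hH : IsAlmostMathieuFamily α β H) : Continuous H :=
  (LipschitzWith.of_dist_le_mul (K := 2 * ‖β‖₊) fun θ θ' => by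
    simpa [dist_eq_norm, Real.dist_eq] using hH.norm_sub_le θ θ').continuous

theorem add_int_mul (hH : IsAlmostMathieuFamily α β H) (θ : ℝ) (m k : ℤ) :
    H (θ + (m * (2 * π * α) + k * (2 * π))) = (ℓ2.shift m).conjContinuousAlgEquiv (H θ) := by
  ext ξ n
  have hcos : cos (2 * π * α * n + (θ + (m * (2 * π * α) + k * (2 * π))))
      = cos (2 * π * α * ↑(n + m) + θ) := by
    rw [← Real.cos_add_int_mul_two_pi (2 * π * α * ↑(n + m) + θ) k]
    push_cast
    ring_nf
  rw [ContinuousLinearEquiv.conjContinuousAlgEquiv_apply_apply, ℓ2.shift_apply, hH, hH, hcos]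
  simp only [ℓ2.shift_symm_apply]
  ring_nf

theorem spectrum_add_eq (hH : IsAlmostMathieuFamily α β H) (θ : ℝ) {g : ℝ}
    (hg : g ∈ AddSubgroup.closure {2 * π * α, 2 * π}) :
    spectrum ℂ (H (θ + g)) = spectrum ℂ (H θ) := by
  obtain ⟨m, k, rfl⟩ := AddSubgroup.mem_closure_pair.1 hg
  simpa only [zsmul_eq_mul, hH.add_int_mul] using AlgEquiv.spectrum_eq _ _

end IsAlmostMathieuFamily

/-- For irrational `α`, the spectrum of the almost Mathieu operator `H(α,β,θ)`
does not depend on `θ`. -/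
theorem almost_mathieu_spectrum_indep (α β : ℝ) (hα : Irrational α)
    (H : ℝ → (ℓ2 →L[ℂ] ℓ2))
    (hH : ∀ (θ : ℝ) (ξ : ℓ2) (n : ℤ),
      (H θ ξ : ∀ _ : ℤ, ℂ) n =
        (ξ : ∀ _ : ℤ, ℂ) (n + 1) + (ξ : ∀ _ : ℤ, ℂ) (n - 1) +
          (2 * β * Real.cos (2 * Real.pi * α * n + θ) : ℝ) * (ξ : ∀ _ : ℤ, ℂ) n) :
    ∀ θ θ' : ℝ, spectrum ℂ (H θ) = spectrum ℂ (H θ') := by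
  have hAM : IsAlmostMathieuFamily α β H := hH
  have hdense : Dense (AddSubgroup.closure {2 * π * α, 2 * π} : Set ℝ) := by
    rwa [dense_addSubgroupClosure_pair_iff, mul_div_cancel_left₀ α (by positivity)]
  have hmem : ∀ θ θ' z, z ∈ spectrum ℂ (H θ) → z ∈ spectrum ℂ (H θ') := fun θ θ' z hz =>
    have hclosed := (isClosed_setOf_mem_spectrum z).preimage hAM.continuous
    have hinv : ∀ ψ ∈ H ⁻¹' {a | z ∈ spectrum ℂ a}, ∀ g ∈ AddSubgroup.closure {2 * π * α, 2 * π},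
        ψ + g ∈ H ⁻¹' {a | z ∈ spectrum ℂ a} := fun ψ hψ g hg => by
      simpa only [Set.mem_preimage, Set.mem_ofPred_eq, hAM.spectrum_add_eq ψ hg] using hψ
    Set.eq_univ_iff_forall.1 (hclosed.eq_univ_of_add_mem hdense hinv ⟨θ, hz⟩) θ'
  exact fun θ θ' => Set.ext fun z => ⟨hmem θ θ' z, hmem θ' θ z⟩
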